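/- arXiv:2409.02204 — 3 statements merged into one kernel-verified Lean document; each statement's English description precedes it below -/
import Mathlib

section
/- Let μ, σ > 0, δ ∈ {0,1}, s ≠ 0, and let X be the random variable X = (1-B)·Z₁^(-1/s) + B·Z₂^(-1/s), where B ~ Bernoulli(δ/(σ+δ)) is independent of Z₁ ~ Gamma(μ, 1/(μσ)) and Z₂ ~ Gamma(μ+1, 1/(μσ)). Then for any real q with μ - q/s > 0, E[X^q] = (μσ)^(q/s) · (Γ(μ - q/s)/Γ(μ)) · [σ/(σ+δ) + (δ/(σ+δ)) · (μ - q/s)/μ]. -/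
/-!
Since `B ∈ {0, 1}` and `Z₁, Z₂ > 0` almost surely,
`X ^ q = (1 - B) Z₁ ^ (-q/s) + B Z₂ ^ (-q/s)`, so by independence `E[X ^ q]` is the
`Bernoulli(δ/(σ+δ))` mixture of two moments of Gamma laws. For `Z ~ gammaMeasure a r`
(shape `a`, rate `r`) one has `E[Z ^ t] = r ^ (-t) Γ(a + t) / Γ(a)` whenever `a + t > 0`,
by comparing the integrand with the Gamma integral. With `r = μσ` and `t = -q/s`, the
functional equation `Γ(x + 1) = x Γ(x)` turns the moment of `Z₂` into that of `Z₁` times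
`(μ - q/s)/μ`.
-/

open Real MeasureTheory ProbabilityTheory Set

lemma eq_indicator_one_of_forall_eq_zero_or_eq_one {Ω : Type*} {B : Ω → ℝ}
    (hB01 : ∀ ω, B ω = 0 ∨ B ω = 1) :
    B = {ω | B ω = 1}.indicator 1 := by
  funext ω
  rcases hB01 ω with h | h <;> simp [h]

namespace ProbabilityTheory

variable {a r : ℝ}

lemma measurable_gammaPDF (a r : ℝ) : Measurable (gammaPDF a r) :=
  (measurable_gammaPDFReal a r).ennreal_ofReal

lemma ae_pos_gammaMeasure (a r : ℝ) : ∀ᵐ x ∂gammaMeasure a r, 0 < x := by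
  rw [gammaMeasure, ae_withDensity_iff (measurable_gammaPDF a r)]
  filter_upwards [volume.ae_ne (0 : ℝ)] with x hx hpdf
  exact hx.lt_or_gt.resolve_left fun hneg => hpdf (gammaPDF_of_neg hneg)

lemma toReal_gammaPDF_smul_rpow_ae_eq (ha : 0 < a) (hr : 0 < r) (t : ℝ) :
    (fun x => (gammaPDF a r x).toReal • x ^ t) =ᵐ[volume]
      (Ioi 0).indicator fun x => r ^ a / Gamma a * (x ^ (a + t - 1) * exp (-(r * x))) := by
  filter_upwards [volume.ae_ne (0 : ℝ)] with x hx
  rcases hx.lt_or_gt with hneg | hpos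
  · simp [gammaPDF_of_neg hneg, hneg.not_gt]
  · rw [indicator_of_mem (mem_Ioi.mpr hpos), gammaPDF_of_nonneg hpos.le,
      ENNReal.toReal_ofReal (by positivity), smul_eq_mul,
      show a + t - 1 = (a - 1) + t by ring, rpow_add hpos]
    ring

lemma integrable_rpow_gammaMeasure {t : ℝ} (ha : 0 < a) (hr : 0 < r) (hat : 0 < a + t) :
    Integrable (fun x => x ^ t) (gammaMeasure a r) := by
  rw [gammaMeasure, integrable_withDensity_iff_integrable_smul'
    (measurable_gammaPDF a r) (ae_of_all _ fun _ => ENNReal.ofReal_lt_top),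
    integrable_congr (toReal_gammaPDF_smul_rpow_ae_eq ha hr t),
    integrable_indicator_iff measurableSet_Ioi]
  have := integrableOn_rpow_mul_exp_neg_mul_rpow (p := 1) (by linarith : -1 < a + t - 1)
    zero_lt_one hr
  simp only [rpow_one, neg_mul] at this
  exact this.const_mul _

lemma integral_rpow_gammaMeasure {t : ℝ} (ha : 0 < a) (hr : 0 < r) (hat : 0 < a + t) :
    ∫ x, x ^ t ∂gammaMeasure a r = r ^ (-t) * (Gamma (a + t) / Gamma a) := by
  rw [gammaMeasure, integral_withDensity_eq_integral_toReal_smul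
    (measurable_gammaPDF a r) (ae_of_all _ fun _ => ENNReal.ofReal_lt_top),
    integral_congr_ae (toReal_gammaPDF_smul_rpow_ae_eq ha hr t),
    integral_indicator measurableSet_Ioi, integral_const_mul,
    integral_rpow_mul_exp_neg_mul_Ioi hat hr, one_div, inv_rpow hr.le, ← rpow_neg hr.le]
  have hpow : r ^ a * r ^ (-(a + t)) = r ^ (-t) := by rw [← rpow_add hr]; ring_nf
  rw [← hpow]
  ring

variable {Ω : Type*} [MeasurableSpace Ω] {P : Measure Ω}

lemma ae_pos_of_map_eq_gammaMeasure {Z : Ω → ℝ} (hZ : Measurable Z)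
    (hmap : P.map Z = gammaMeasure a r) : ∀ᵐ ω ∂P, 0 < Z ω :=
  ae_of_ae_map hZ.aemeasurable (hmap ▸ ae_pos_gammaMeasure a r)

lemma integrable_rpow_of_map_eq_gammaMeasure {Z : Ω → ℝ} {t : ℝ} (hZ : Measurable Z)
    (hmap : P.map Z = gammaMeasure a r) (ha : 0 < a) (hr : 0 < r) (hat : 0 < a + t) :
    Integrable (fun ω => Z ω ^ t) P :=
  (hmap ▸ integrable_rpow_gammaMeasure ha hr hat).comp_measurable hZ

lemma integral_rpow_of_map_eq_gammaMeasure {Z : Ω → ℝ} {t : ℝ} (hZ : Measurable Z)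
    (hmap : P.map Z = gammaMeasure a r) (ha : 0 < a) (hr : 0 < r) (hat : 0 < a + t) :
    ∫ ω, Z ω ^ t ∂P = r ^ (-t) * (Gamma (a + t) / Gamma a) := by
  have hint := hmap ▸ integrable_rpow_gammaMeasure ha hr hat
  rw [← integral_rpow_gammaMeasure ha hr hat, ← hmap,
    integral_map hZ.aemeasurable hint.aestronglyMeasurable]

lemma integral_one_sub_mul_add_mul_of_indepFun [IsProbabilityMeasure P] {B Y₁ Y₂ : Ω → ℝ}
    (hB : Measurable B) (hB01 : ∀ ω, B ω = 0 ∨ B ω = 1)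
    (hindep : IndepFun B (fun ω => (Y₁ ω, Y₂ ω)) P) (h₁ : Integrable Y₁ P)
    (h₂ : Integrable Y₂ P) :
    ∫ ω, ((1 - B ω) * Y₁ ω + B ω * Y₂ ω) ∂P =
      (1 - P.real {ω | B ω = 1}) * ∫ ω, Y₁ ω ∂P +
        P.real {ω | B ω = 1} * ∫ ω, Y₂ ω ∂P := by
  have hset : MeasurableSet {ω | B ω = 1} := hB (measurableSet_singleton 1)
  have hBind := eq_indicator_one_of_forall_eq_zero_or_eq_one hB01
  have hBint : Integrable B P := hBind ▸ (integrable_const 1).indicator hset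
  have hEB : ∫ ω, B ω ∂P = P.real {ω | B ω = 1} := by
    rw [← integral_indicator_one hset, ← hBind]
  have hind₁ : IndepFun (fun ω => 1 - B ω) Y₁ P :=
    hindep.comp (measurable_const.sub measurable_id) measurable_fst
  have hind₂ : IndepFun B Y₂ P := hindep.comp measurable_id measurable_snd
  have hbdd₁ : ∀ᵐ ω ∂P, ‖1 - B ω‖ ≤ 1 := ae_of_all _ fun ω => by
    rcases hB01 ω with h | h <;> simp [h]
  have hbdd₂ : ∀ᵐ ω ∂P, ‖B ω‖ ≤ 1 := ae_of_all _ fun ω => by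
    rcases hB01 ω with h | h <;> simp [h]
  have hm₁ : AEStronglyMeasurable (fun ω => 1 - B ω) P :=
    (measurable_const.sub hB).aestronglyMeasurable
  rw [integral_add (h₁.bdd_mul hm₁ hbdd₁) (h₂.bdd_mul hB.aestronglyMeasurable hbdd₂),
    hind₁.integral_fun_mul_eq_mul_integral hm₁ h₁.aestronglyMeasurable,
    hind₂.integral_fun_mul_eq_mul_integral hB.aestronglyMeasurable h₂.aestronglyMeasurable,
    integral_sub (integrable_const 1) hBint, hEB]
  simp

end ProbabilityTheory

lemma Real.rpow_one_sub_mul_add_mul_of_eq_zero_or_eq_one {b x y : ℝ} (hb : b = 0 ∨ b = 1)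
    (hx : 0 ≤ x) (hy : 0 ≤ y) (u q : ℝ) :
    ((1 - b) * x ^ u + b * y ^ u) ^ q = (1 - b) * x ^ (u * q) + b * y ^ (u * q) := by
  rcases hb with rfl | rfl <;> simp [← rpow_mul, hx, hy]

lemma Real.Gamma_add_one_div_Gamma_add_one {x y : ℝ} (hx : x ≠ 0) (hy : y ≠ 0) :
    Gamma (x + 1) / Gamma (y + 1) = x / y * (Gamma x / Gamma y) := by
  rw [Gamma_add_one hx, Gamma_add_one hy, mul_div_mul_comm]

theorem weighted_family_moment_general {Ω : Type*} [MeasurableSpace Ω]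
    (P : Measure Ω) [IsProbabilityMeasure P]
    (μ σ δ s q : ℝ) (hμ : 0 < μ) (hσ : 0 < σ) (hδ : δ = 0 ∨ δ = 1)
    (B Z₁ Z₂ : Ω → ℝ)
    (hB : Measurable B) (hZ₁m : Measurable Z₁) (hZ₂m : Measurable Z₂)
    (hB01 : ∀ ω, B ω = 0 ∨ B ω = 1)
    (hBp : (P {ω | B ω = 1}).toReal = δ / (σ + δ))
    (hindep : IndepFun B (fun ω => (Z₁ ω, Z₂ ω)) P)
    (hZ₁ : Measure.map Z₁ P = gammaMeasure μ (μ * σ))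
    (hZ₂ : Measure.map Z₂ P = gammaMeasure (μ + 1) (μ * σ))
    (X : Ω → ℝ)
    (hX : ∀ ω, X ω = (1 - B ω) * Z₁ ω ^ (-1 / s) + B ω * Z₂ ω ^ (-1 / s))
    (hq : 0 < μ - q / s) :
    ∫ ω, X ω ^ q ∂P =
      (μ * σ) ^ (q / s) * (Real.Gamma (μ - q / s) / Real.Gamma μ) *
        (σ / (σ + δ) + δ / (σ + δ) * ((μ - q / s) / μ)) := by
  have hr : 0 < μ * σ := mul_pos hμ hσ
  have hσδ : σ + δ ≠ 0 := by rcases hδ with rfl | rfl <;> positivity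
  have hμq : 0 < μ + -(q / s) := by linarith
  have hμ₁ : 0 < μ + 1 := by linarith
  have hμq₁ : 0 < μ + 1 + -(q / s) := by linarith
  have hXq : (fun ω => X ω ^ q) =ᵐ[P]
      fun ω => (1 - B ω) * Z₁ ω ^ (-(q / s)) + B ω * Z₂ ω ^ (-(q / s)) := by
    filter_upwards [ae_pos_of_map_eq_gammaMeasure hZ₁m hZ₁,
      ae_pos_of_map_eq_gammaMeasure hZ₂m hZ₂] with ω h₁ h₂
    rw [hX, rpow_one_sub_mul_add_mul_of_eq_zero_or_eq_one (hB01 ω) h₁.le h₂.le,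
      show -1 / s * q = -(q / s) by ring]
  have hindep' : IndepFun B (fun ω => (Z₁ ω ^ (-(q / s)), Z₂ ω ^ (-(q / s)))) P :=
    hindep.comp measurable_id ((measurable_fst.pow_const _).prodMk (measurable_snd.pow_const _))
  rw [integral_congr_ae hXq, integral_one_sub_mul_add_mul_of_indepFun hB hB01 hindep'
      (integrable_rpow_of_map_eq_gammaMeasure hZ₁m hZ₁ hμ hr hμq)
      (integrable_rpow_of_map_eq_gammaMeasure hZ₂m hZ₂ hμ₁ hr hμq₁),
    integral_rpow_of_map_eq_gammaMeasure hZ₁m hZ₁ hμ hr hμq,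
    integral_rpow_of_map_eq_gammaMeasure hZ₂m hZ₂ hμ₁ hr hμq₁,
    measureReal_def, hBp, neg_neg, show μ + 1 + -(q / s) = μ - q / s + 1 by ring,
    ← sub_eq_add_neg,
    Gamma_add_one_div_Gamma_add_one hq.ne' hμ.ne']
  field_simp
  ring

/-- Let `X = (1-B)·Z₁^(-1/s) + B·Z₂^(-1/s)` with `B ~ Bernoulli(δ/(σ+δ))` independent of
`Z₁ ~ Gamma(μ, 1/(μσ))` and `Z₂ ~ Gamma(μ+1, 1/(μσ))`.  Then for real `q` with
`μ - q/s > 0`,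
`E[X^q] = (μσ)^(q/s) · (Γ(μ-q/s)/Γ(μ)) · [σ/(σ+δ) + (δ/(σ+δ))·(μ-q/s)/μ]`. -/
theorem weighted_family_moment {Ω : Type*} [MeasurableSpace Ω]
    (P : Measure Ω) [IsProbabilityMeasure P]
    (μ σ δ s q : ℝ) (hμ : 0 < μ) (hσ : 0 < σ) (hδ : δ = 0 ∨ δ = 1) (hs : s ≠ 0)
    (B Z₁ Z₂ : Ω → ℝ)
    (hB : Measurable B) (hZ₁m : Measurable Z₁) (hZ₂m : Measurable Z₂)
    (hB01 : ∀ ω, B ω = 0 ∨ B ω = 1)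
    (hBp : (P {ω | B ω = 1}).toReal = δ / (σ + δ))
    (hindep : IndepFun B (fun ω => (Z₁ ω, Z₂ ω)) P)
    (hZ₁ : Measure.map Z₁ P = gammaMeasure μ (μ * σ))
    (hZ₂ : Measure.map Z₂ P = gammaMeasure (μ + 1) (μ * σ))
    (X : Ω → ℝ)
    (hX : ∀ ω, X ω = (1 - B ω) * Z₁ ω ^ (-1 / s) + B ω * Z₂ ω ^ (-1 / s))
    (hq : 0 < μ - q / s) :
    ∫ ω, X ω ^ q ∂P =
      (μ * σ) ^ (q / s) * (Real.Gamma (μ - q / s) / Real.Gamma μ) *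
        (σ / (σ + δ) + δ / (σ + δ) * ((μ - q / s) / μ)) :=
  weighted_family_moment_general P μ σ δ s q hμ hσ hδ B Z₁ Z₂ hB hZ₁m hZ₂m hB01 hBp hindep hZ₁ hZ₂ X
    hX hq
end

section
/- Let μ, σ > 0, δ ∈ {0,1}, s ≠ 0, and let X = (1-B)·Z₁^(-1/s) + B·Z₂^(-1/s) with B ~ Bernoulli(δ/(σ+δ)) independent of Z₁ ~ Gamma(μ, 1/(μσ)) and Z₂ ~ Gamma(μ+1, 1/(μσ)). Then E[log X] = -(1/s)·[ψ(μ+1) - log(μσ) - (1/μ)·σ/(σ+δ)], where ψ is the digamma function. -/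
open Real MeasureTheory ProbabilityTheory

/-- The digamma function `ψ = Γ'/Γ`. -/
noncomputable def digamma (x : ℝ) : ℝ := deriv Real.Gamma x / Real.Gamma x

/-!
For `Z ~ Gamma(a, rate r)` the substitution `t = r x` gives
`E[log Z] = (Γ'(a) - log r · Γ(a)) / Γ(a) = ψ(a) - log r`, where
`Γ'(a) = ∫₀^∞ t^(a-1) log t e^(-t) dt` is the derivative of the Mellin transform of `e^(-t)`.
Since `B ∈ {0, 1}`, almost surely `log X = (1 - B)(-1/s) log Z₁ + B (-1/s) log Z₂`, so by
independence `E[log X]` is the `p`-mixture of the two gamma log-moments, `p = δ/(σ+δ)`;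
the recursion `ψ(μ) = ψ(μ+1) - 1/μ` puts it in the stated form.
-/

open Set Filter Asymptotics Topology

theorem mellinConvergent_log_mul_exp_neg {s : ℂ} (hs : 0 < s.re) :
    MellinConvergent (fun t => log t • (exp (-t) : ℂ)) s := by
  refine (mellin_hasDerivAt_of_isBigO_rpow (a := s.re + 1) (b := 0) ?_ ?_ (lt_add_one _) ?_ hs).1
  · refine (Continuous.continuousOn ?_).locallyIntegrableOn measurableSet_Ioi
    exact Complex.continuous_ofReal.comp (continuous_exp.comp continuous_neg)
  · rw [← isBigO_norm_left]
    simp_rw [Complex.norm_real, isBigO_norm_left]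
    simpa only [neg_one_mul] using (isLittleO_exp_neg_mul_rpow_atTop zero_lt_one _).isBigO
  · simp_rw [neg_zero, rpow_zero]
    refine isBigO_const_of_tendsto (?_ : Tendsto _ _ (𝓝 (1 : ℂ))) one_ne_zero
    rw [(by simp : (1 : ℂ) = exp (-0))]
    exact (Complex.continuous_ofReal.comp (continuous_exp.comp continuous_neg)).continuousWithinAt

theorem ofReal_cpow_smul_log_smul_exp_neg {a t : ℝ} (ht : 0 < t) :
    (t : ℂ) ^ ((a : ℂ) - 1) • (log t • (exp (-t) : ℂ))
      = ((t ^ (a - 1) * (log t * exp (-t)) : ℝ) : ℂ) := by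
  rw [← Complex.ofReal_one, ← Complex.ofReal_sub, ← Complex.ofReal_cpow ht.le]
  simp only [smul_eq_mul, Complex.real_smul]
  push_cast
  ring

namespace Real

theorem deriv_Gamma_add_one {x : ℝ} (hx : ∀ m : ℕ, x ≠ -m) :
    deriv Gamma (x + 1) = Gamma x + x * deriv Gamma x := by
  have hx0 : x ≠ 0 := by simpa using hx 0
  have hGamma : (fun y => Gamma (y + 1)) =ᶠ[𝓝 x] fun y => y * Gamma y := by
    filter_upwards [isOpen_ne.mem_nhds hx0] with y hy using Gamma_add_one hy
  rw [← deriv_comp_add_const, hGamma.deriv_eq,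
    deriv_fun_mul differentiableAt_fun_id (differentiableAt_Gamma hx), deriv_id'', one_mul]

theorem integrableOn_rpow_mul_log_mul_exp_neg {a : ℝ} (ha : 0 < a) :
    IntegrableOn (fun t => t ^ (a - 1) * (log t * exp (-t))) (Ioi 0) := by
  have h := (mellinConvergent_log_mul_exp_neg (s := a) (by simpa using ha)).congr_fun
    (fun t ht => ofReal_cpow_smul_log_smul_exp_neg ht) measurableSet_Ioi
  exact (by simpa only [RCLike.re_to_complex, Complex.ofReal_re] using h.re : Integrable _ _)

theorem hasDerivAt_Gamma_of_pos {a : ℝ} (ha : 0 < a) :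
    HasDerivAt Gamma (∫ t in Ioi 0, t ^ (a - 1) * (log t * exp (-t))) a := by
  have hC := Complex.hasDerivAt_GammaIntegral (s := a) (by simpa using ha)
  rw [setIntegral_congr_fun (g := fun t : ℝ => ((t ^ (a - 1) * (log t * exp (-t)) : ℝ) : ℂ))
    measurableSet_Ioi fun t ht => by simpa using ofReal_cpow_smul_log_smul_exp_neg (a := a) ht,
    integral_complex_ofReal] at hC
  have hGamma : Complex.GammaIntegral =ᶠ[𝓝 (a : ℂ)] Complex.Gamma := by
    filter_upwards [Complex.continuous_re.isOpen_preimage _ isOpen_Ioi |>.mem_nhds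
      (by simpa using ha)] with z hz using (Complex.Gamma_eq_integral hz).symm
  exact (hC.congr_of_eventuallyEq hGamma.symm).real_of_complex

end Real

theorem digamma_add_one {x : ℝ} (hx : ∀ m : ℕ, x ≠ -m) :
    digamma (x + 1) = digamma x + x⁻¹ := by
  have hx0 : x ≠ 0 := by simpa using hx 0
  rw [digamma, digamma, Real.deriv_Gamma_add_one hx, Real.Gamma_add_one hx0]
  field_simp [Real.Gamma_ne_zero hx]
  ring

theorem integrableOn_log_sub_mul_rpow_mul_exp_neg {a : ℝ} (ha : 0 < a) (c : ℝ) :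
    IntegrableOn (fun t => (log t - c) * (t ^ (a - 1) * exp (-t))) (Ioi 0) := by
  refine ((Real.integrableOn_rpow_mul_log_mul_exp_neg ha).sub
    ((Real.GammaIntegral_convergent ha).const_mul c)).congr_fun (fun t _ => ?_) measurableSet_Ioi
  simp only [Pi.sub_apply]
  ring

theorem integral_log_sub_mul_rpow_mul_exp_neg {a : ℝ} (ha : 0 < a) (c : ℝ) :
    ∫ t in Ioi 0, (log t - c) * (t ^ (a - 1) * exp (-t)) = deriv Gamma a - c * Gamma a := by
  rw [(Real.hasDerivAt_Gamma_of_pos ha).deriv, Real.Gamma_eq_integral ha, ← integral_const_mul,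
    ← integral_sub (Real.integrableOn_rpow_mul_log_mul_exp_neg ha)
      ((Real.GammaIntegral_convergent ha).const_mul c)]
  congr with t
  ring

theorem toReal_gammaPDF_smul_eq_indicator {a r : ℝ} (ha : 0 < a) (hr : 0 < r) (g : ℝ → ℝ) :
    (fun x => (gammaPDF a r x).toReal • g x)
      = (Ici 0).indicator fun x => r ^ a / Gamma a * x ^ (a - 1) * exp (-(r * x)) * g x := by
  ext x
  by_cases hx : 0 ≤ x
  · rw [indicator_of_mem (mem_Ici.2 hx), gammaPDF,
      ENNReal.toReal_ofReal (gammaPDFReal_nonneg ha hr x), gammaPDFReal, if_pos hx, smul_eq_mul]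
  · simp [gammaPDF, gammaPDFReal, hx]

theorem integrable_gammaMeasure_iff {a r : ℝ} (ha : 0 < a) (hr : 0 < r) {g : ℝ → ℝ} :
    Integrable g (gammaMeasure a r) ↔
      IntegrableOn (fun x => r ^ a / Gamma a * x ^ (a - 1) * exp (-(r * x)) * g x) (Ioi 0) := by
  rw [gammaMeasure, integrable_withDensity_iff_integrable_smul' (f := gammaPDF a r)
    (measurable_gammaPDFReal a r).ennreal_ofReal (ae_of_all _ fun _ => ENNReal.ofReal_lt_top),
    toReal_gammaPDF_smul_eq_indicator ha hr, integrable_indicator_iff measurableSet_Ici,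
    integrableOn_Ici_iff_integrableOn_Ioi]

theorem integral_gammaMeasure {a r : ℝ} (ha : 0 < a) (hr : 0 < r) (g : ℝ → ℝ) :
    ∫ x, g x ∂gammaMeasure a r
      = ∫ x in Ioi 0, r ^ a / Gamma a * x ^ (a - 1) * exp (-(r * x)) * g x := by
  rw [gammaMeasure, integral_withDensity_eq_integral_toReal_smul (f := gammaPDF a r)
    (measurable_gammaPDFReal a r).ennreal_ofReal (ae_of_all _ fun _ => ENNReal.ofReal_lt_top),
    toReal_gammaPDF_smul_eq_indicator ha hr, integral_indicator measurableSet_Ici,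
    integral_Ici_eq_integral_Ioi]

theorem gammaDensity_mul_log_eq {a r x : ℝ} (hr : 0 < r) (hx : 0 < x) :
    r ^ a / Gamma a * x ^ (a - 1) * exp (-(r * x)) * log x
      = r / Gamma a * ((log (r * x) - log r) * ((r * x) ^ (a - 1) * exp (-(r * x)))) := by
  rw [log_mul hr.ne' hx.ne', mul_rpow hr.le hx.le, rpow_sub_one hr.ne']
  field_simp
  ring

theorem integrable_log_gammaMeasure {a r : ℝ} (ha : 0 < a) (hr : 0 < r) :
    Integrable log (gammaMeasure a r) := by
  have hscaled := (integrableOn_Ioi_comp_mul_left_iff _ 0 hr).2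
    (by simpa using integrableOn_log_sub_mul_rpow_mul_exp_neg ha (log r))
  rw [integrable_gammaMeasure_iff ha hr]
  exact IntegrableOn.congr_fun (hscaled.const_mul (r / Gamma a))
    (fun x hx => (gammaDensity_mul_log_eq hr hx).symm) measurableSet_Ioi

theorem integral_log_gammaMeasure {a r : ℝ} (ha : 0 < a) (hr : 0 < r) :
    ∫ x, log x ∂gammaMeasure a r = digamma a - log r := by
  rw [integral_gammaMeasure ha hr,
    setIntegral_congr_fun measurableSet_Ioi fun x hx => gammaDensity_mul_log_eq hr hx,
    integral_const_mul,
    integral_comp_mul_left_Ioi (fun t => (log t - log r) * (t ^ (a - 1) * exp (-t))) 0 hr,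
    mul_zero, integral_log_sub_mul_rpow_mul_exp_neg ha, digamma, smul_eq_mul]
  field_simp [(Gamma_pos_of_pos ha).ne']

theorem ae_pos_gammaMeasure (a r : ℝ) : ∀ᵐ x ∂gammaMeasure a r, 0 < x := by
  have h_nonneg : ∀ᵐ x ∂gammaMeasure a r, 0 ≤ x := by
    rw [ae_iff]
    simp only [not_le]
    change gammaMeasure a r (Iio 0) = 0
    rw [gammaMeasure, withDensity_apply _ measurableSet_Iio, lintegral_gammaPDF_of_nonpos le_rfl]
  have h_ne : ∀ᵐ x ∂gammaMeasure a r, x ≠ 0 :=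
    (withDensity_absolutelyContinuous _ _).ae_le (compl_mem_ae_iff.2 (measure_singleton 0))
  filter_upwards [h_nonneg, h_ne] with x hx hx0 using hx.lt_of_ne' hx0

section RandomVariables

variable {Ω : Type*} [MeasurableSpace Ω] {P : Measure Ω}

namespace ProbabilityTheory.HasLaw

variable {Z : Ω → ℝ} {a r : ℝ}

theorem ae_pos_of_gammaMeasure (hZ : HasLaw Z (gammaMeasure a r) P) : ∀ᵐ ω ∂P, 0 < Z ω :=
  (ae_map_iff hZ.aemeasurable measurableSet_Ioi).1 (hZ.map_eq ▸ ae_pos_gammaMeasure a r)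

theorem integrable_log_of_gammaMeasure (hZ : HasLaw Z (gammaMeasure a r) P) (ha : 0 < a)
    (hr : 0 < r) : Integrable (fun ω => log (Z ω)) P :=
  (integrable_map_measure measurable_log.aestronglyMeasurable hZ.aemeasurable).1
    (hZ.map_eq ▸ integrable_log_gammaMeasure ha hr)

theorem integral_log_of_gammaMeasure (hZ : HasLaw Z (gammaMeasure a r) P) (ha : 0 < a)
    (hr : 0 < r) : ∫ ω, log (Z ω) ∂P = digamma a - log r :=
  (hZ.integral_comp measurable_log.aestronglyMeasurable).trans (integral_log_gammaMeasure ha hr)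

end ProbabilityTheory.HasLaw

theorem integrable_of_zero_or_one [IsFiniteMeasure P] {B : Ω → ℝ} (hB : Measurable B)
    (hB01 : ∀ ω, B ω = 0 ∨ B ω = 1) : Integrable B P :=
  .of_bound hB.aestronglyMeasurable 1 <| ae_of_all _ fun ω => by
    rcases hB01 ω with h | h <;> simp [h]

theorem integral_eq_measureReal_of_zero_or_one {B : Ω → ℝ} (hB : Measurable B)
    (hB01 : ∀ ω, B ω = 0 ∨ B ω = 1) : ∫ ω, B ω ∂P = P.real {ω | B ω = 1} := by
  have hB_indicator : B = {ω | B ω = 1}.indicator 1 := by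
    ext ω
    rcases hB01 ω with h | h <;> simp [indicator, h]
  rw [← integral_indicator_one (measurableSet_eq_fun hB measurable_const), ← hB_indicator]

theorem integral_mixture_of_indepFun [IsProbabilityMeasure P] {B Y₁ Y₂ : Ω → ℝ}
    (hB : Integrable B P) (hY₁ : Integrable Y₁ P) (hY₂ : Integrable Y₂ P)
    (h₁ : IndepFun B Y₁ P) (h₂ : IndepFun B Y₂ P) :
    ∫ ω, (1 - B ω) * Y₁ ω + B ω * Y₂ ω ∂P
      = (1 - ∫ ω, B ω ∂P) * ∫ ω, Y₁ ω ∂P + (∫ ω, B ω ∂P) * ∫ ω, Y₂ ω ∂P := by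
  have h1B : Integrable (fun ω => 1 - B ω) P := (integrable_const 1).sub hB
  have h₁' : IndepFun (fun ω => 1 - B ω) Y₁ P :=
    h₁.comp (measurable_const.sub measurable_id) measurable_id
  rw [integral_add (by exact h₁'.integrable_mul h1B hY₁) (by exact h₂.integrable_mul hB hY₂),
    h₁'.integral_fun_mul_eq_mul_integral h1B.aestronglyMeasurable hY₁.aestronglyMeasurable,
    h₂.integral_fun_mul_eq_mul_integral hB.aestronglyMeasurable hY₂.aestronglyMeasurable,
    integral_sub (integrable_const 1) hB, integral_const, probReal_univ, one_smul]

end RandomVariables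

theorem weighted_family_log_moment_general {Ω : Type*} [MeasurableSpace Ω]
    (P : Measure Ω) [IsProbabilityMeasure P]
    (μ σ δ s : ℝ) (hμ : 0 < μ) (hσ : 0 < σ) (hδ : δ = 0 ∨ δ = 1)
    (B Z₁ Z₂ : Ω → ℝ)
    (hB : Measurable B) (hZ₁m : Measurable Z₁) (hZ₂m : Measurable Z₂)
    (hB01 : ∀ ω, B ω = 0 ∨ B ω = 1)
    (hBp : (P {ω | B ω = 1}).toReal = δ / (σ + δ))
    (hindep : IndepFun B (fun ω => (Z₁ ω, Z₂ ω)) P)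
    (hZ₁ : Measure.map Z₁ P = gammaMeasure μ (μ * σ))
    (hZ₂ : Measure.map Z₂ P = gammaMeasure (μ + 1) (μ * σ))
    (X : Ω → ℝ)
    (hX : ∀ ω, X ω = (1 - B ω) * Z₁ ω ^ (-1 / s) + B ω * Z₂ ω ^ (-1 / s)) :
    ∫ ω, Real.log (X ω) ∂P =
      -(1 / s) * (digamma (μ + 1) - Real.log (μ * σ) - 1 / μ * (σ / (σ + δ))) := by
  have hr : 0 < μ * σ := mul_pos hμ hσ
  have hlaw₁ : HasLaw Z₁ (gammaMeasure μ (μ * σ)) P := ⟨hZ₁m.aemeasurable, hZ₁⟩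
  have hlaw₂ : HasLaw Z₂ (gammaMeasure (μ + 1) (μ * σ)) P := ⟨hZ₂m.aemeasurable, hZ₂⟩
  have hlogX : (fun ω => log (X ω)) =ᵐ[P]
      fun ω => (1 - B ω) * (-1 / s * log (Z₁ ω)) + B ω * (-1 / s * log (Z₂ ω)) := by
    filter_upwards [hlaw₁.ae_pos_of_gammaMeasure, hlaw₂.ae_pos_of_gammaMeasure] with ω h₁ h₂
    rcases hB01 ω with h | h <;> simp [hX ω, h, log_rpow, h₁, h₂]
  have hσδ : σ + δ ≠ 0 := by rcases hδ with rfl | rfl <;> positivity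
  have hψ := digamma_add_one fun m => ((neg_nonpos.2 m.cast_nonneg).trans_lt hμ).ne'
  rw [integral_congr_ae hlogX, integral_mixture_of_indepFun (integrable_of_zero_or_one hB hB01)
      ((hlaw₁.integrable_log_of_gammaMeasure hμ hr).const_mul _)
      ((hlaw₂.integrable_log_of_gammaMeasure (by linarith) hr).const_mul _)
      ((hindep.comp measurable_id measurable_fst).comp measurable_id (measurable_log.const_mul _))
      ((hindep.comp measurable_id measurable_snd).comp measurable_id (measurable_log.const_mul _)),
    integral_const_mul, integral_const_mul, hlaw₁.integral_log_of_gammaMeasure hμ hr,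
    hlaw₂.integral_log_of_gammaMeasure (by linarith) hr,
    integral_eq_measureReal_of_zero_or_one hB hB01, measureReal_def, hBp, hψ]
  field_simp
  ring

/-- With `X` from the weighted exponential family (mixture representation with generator
`T(x) = x^(-s)`), `E[log X] = -(1/s)·[ψ(μ+1) - log(μσ) - (1/μ)·σ/(σ+δ)]`. -/
theorem weighted_family_log_moment {Ω : Type*} [MeasurableSpace Ω]
    (P : Measure Ω) [IsProbabilityMeasure P]
    (μ σ δ s : ℝ) (hμ : 0 < μ) (hσ : 0 < σ) (hδ : δ = 0 ∨ δ = 1) (hs : s ≠ 0)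
    (B Z₁ Z₂ : Ω → ℝ)
    (hB : Measurable B) (hZ₁m : Measurable Z₁) (hZ₂m : Measurable Z₂)
    (hB01 : ∀ ω, B ω = 0 ∨ B ω = 1)
    (hBp : (P {ω | B ω = 1}).toReal = δ / (σ + δ))
    (hindep : IndepFun B (fun ω => (Z₁ ω, Z₂ ω)) P)
    (hZ₁ : Measure.map Z₁ P = gammaMeasure μ (μ * σ))
    (hZ₂ : Measure.map Z₂ P = gammaMeasure (μ + 1) (μ * σ))
    (X : Ω → ℝ)
    (hX : ∀ ω, X ω = (1 - B ω) * Z₁ ω ^ (-1 / s) + B ω * Z₂ ω ^ (-1 / s)) :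
    ∫ ω, Real.log (X ω) ∂P =
      -(1 / s) * (digamma (μ + 1) - Real.log (μ * σ) - 1 / μ * (σ / (σ + δ))) :=
  weighted_family_log_moment_general P μ σ δ s hμ hσ hδ B Z₁ Z₂ hB hZ₁m hZ₂m hB01 hBp hindep hZ₁ hZ₂
    X hX
end

section
/- For μ, σ > 0 and δ = 1, define m₁ = (1/(σ+1))(ψ(μ+1) − log(μσ)), m₃' = ψ(μ+1) − log(μσ) − σ/(μ(σ+1)), m₂ = σ⁻¹( m₃' + μ⁻¹( m₁ + 1 ) ), and m₄ = (1/σ)(1 + 1/((σ+1)μ)). Then σ is the unique positive root of the quadratic Q(t) = m₄ t² − (1 − m₄ + m₂/(m₁+1)) t − (1 − m₃'/(m₁+1)) = 0. -/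
open Real

open Set in
private lemma diffAt_logGamma {x : ℝ} (hx : 0 < x) :
    DifferentiableAt ℝ (Real.log ∘ Real.Gamma) x := by
  have h : ∀ m : ℕ, x ≠ -m := fun m => by
    have : (0:ℝ) ≤ m := Nat.cast_nonneg m
    intro h; rw [h] at hx; linarith
  exact (Real.differentiableAt_Gamma h).log (Real.Gamma_ne_zero h)

private lemma digamma_eq {x : ℝ} (hx : 0 < x) :
    digamma x = deriv (Real.log ∘ Real.Gamma) x := by
  have h : ∀ m : ℕ, x ≠ -m := fun m => by
    have : (0:ℝ) ≤ m := Nat.cast_nonneg m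
    intro h; rw [h] at hx; linarith
  rw [digamma, Function.comp_def, deriv.log (Real.differentiableAt_Gamma h)
    (Real.Gamma_ne_zero h)]

open Set in
private lemma logGamma_succ {x : ℝ} (hx : 0 < x) :
    (Real.log ∘ Real.Gamma) (x + 1) = (Real.log ∘ Real.Gamma) x + Real.log x := by
  simp only [Function.comp_apply, Real.Gamma_add_one hx.ne',
    Real.log_mul hx.ne' (Real.Gamma_pos_of_pos hx).ne', add_comm]

open Set in
private lemma log_le_digamma {x : ℝ} (hx : 0 < x) : Real.log x ≤ digamma (x + 1) := by
  rw [digamma_eq (by linarith)]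
  have h := Real.convexOn_log_Gamma.slope_le_deriv (mem_Ioi.mpr hx)
    (mem_Ioi.mpr (by linarith : (0:ℝ) < x + 1)) (by linarith) (diffAt_logGamma (by linarith))
  rwa [slope_def_field, logGamma_succ hx, add_sub_cancel_left,
    show x + 1 - x = (1:ℝ) by ring, div_one] at h

open Set in
private lemma digamma_le_log {x : ℝ} (hx : 0 < x) : digamma (x + 1) ≤ Real.log (x + 1) := by
  rw [digamma_eq (by linarith)]
  have h := Real.convexOn_log_Gamma.deriv_le_slope
    (mem_Ioi.mpr (by linarith : (0:ℝ) < x + 1))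
    (mem_Ioi.mpr (by linarith : (0:ℝ) < x + 2)) (by linarith) (diffAt_logGamma (by linarith))
  rwa [slope_def_field, show x + 2 = (x + 1) + 1 by ring,
    logGamma_succ (by linarith : (0:ℝ) < x + 1), add_sub_cancel_left,
    show x + 1 + 1 - (x + 1) = (1:ℝ) by ring, div_one] at h

private lemma key_alg (μ σ A m₁ m₃ m₂ m₄ : ℝ) (Q : ℝ → ℝ) (hμ : 0 < μ) (hσ : 0 < σ)
    (e1 : m₁ = 1 / (σ + 1) * A) (e2 : m₃ = A - σ / (μ * (σ + 1)))
    (e3 : m₂ = σ⁻¹ * (m₃ + μ⁻¹ * (m₁ + 1))) (e4 : m₄ = 1 / σ * (1 + 1 / ((σ + 1) * μ)))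
    (eQ : ∀ t, Q t = m₄ * t ^ 2 - (1 - m₄ + m₂ / (m₁ + 1)) * t - (1 - m₃ / (m₁ + 1)))
    (hB : 0 < A + σ + 1) (hub : A ≤ 1 / μ + 1 / σ - 1) :
    Q σ = 0 ∧ ∀ t, 0 < t → Q t = 0 → t = σ := by
  have hs1 : (0:ℝ) < σ + 1 := by linarith
  have hm1 : 0 < m₁ + 1 := by
    rw [e1]
    have h : 1 / (σ + 1) * A + 1 = (A + σ + 1) / (σ + 1) := by field_simp; ring
    rw [h]; positivity
  have hm1' : m₁ + 1 ≠ 0 := hm1.ne'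
  have hm4 : 0 < m₄ := by rw [e4]; positivity
  -- constant coefficient is nonnegative: m₃ ≤ m₁ + 1
  have hc : 0 ≤ 1 - m₃ / (m₁ + 1) := by
    have h2 : A * μ * σ ≤ σ + μ - μ * σ := by
      have h3 := mul_le_mul_of_nonneg_left hub (mul_pos hμ hσ).le
      have h4 : μ * σ * (1 / μ + 1 / σ - 1) = σ + μ - μ * σ := by field_simp
      nlinarith
    have h1 : m₃ ≤ m₁ + 1 := by
      rw [e1, e2]
      have hkey : (1 / (σ + 1) * A + 1) - (A - σ / (μ * (σ + 1)))
          = (σ + μ + μ * σ - A * μ * σ) / (μ * (σ + 1)) := by field_simp; ring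
      have hnum : 0 ≤ (σ + μ + μ * σ - A * μ * σ) / (μ * (σ + 1)) :=
        div_nonneg (by nlinarith) (by positivity)
      linarith
    have := div_le_one_of_le₀ h1 (le_of_lt hm1)
    linarith
  have hQσ : Q σ = 0 := by
    have r2 : m₃ / (m₁ + 1) - m₂ / (m₁ + 1) * σ = -(1 / μ) := by
      rw [e3]
      field_simp
      ring
    have r3 : m₄ * σ * (σ + 1) = σ + 1 + 1 / μ := by
      rw [e4]
      field_simp
    rw [eQ]
    linear_combination r3 + r2
  refine ⟨hQσ, fun t ht hQt => ?_⟩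
  rw [eQ] at hQσ hQt
  have hfac : (t - σ) * (m₄ * (t + σ) - (1 - m₄ + m₂ / (m₁ + 1))) = 0 := by
    linear_combination hQt - hQσ
  rcases mul_eq_zero.mp hfac with h | h
  · linarith [sub_eq_zero.mp h]
  · -- other root is nonpositive, contradiction with t > 0
    exfalso
    have h' : m₄ * (t + σ) = 1 - m₄ + m₂ / (m₁ + 1) := by linarith
    nlinarith [mul_pos (mul_pos hm4 hσ) ht]

/-- For `μ, σ > 0` and `δ = 1`, with the closed-form population moments
`m₁ = (1/(σ+1))(ψ(μ+1) − log(μσ))`, `m₃' = ψ(μ+1) − log(μσ) − σ/(μ(σ+1))`,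
`m₂ = σ⁻¹(m₃' + μ⁻¹(m₁ + 1))`, `m₄ = (1/σ)(1 + 1/((σ+1)μ))`, the parameter `σ` is the
unique positive root of `Q(t) = m₄t² − (1 − m₄ + m₂/(m₁+1))t − (1 − m₃'/(m₁+1))`. -/
theorem sigma_unique_positive_root (μ σ : ℝ) (hμ : 0 < μ) (hσ : 0 < σ) :
    let m₁ := 1 / (σ + 1) * (digamma (μ + 1) - Real.log (μ * σ))
    let m₃' := digamma (μ + 1) - Real.log (μ * σ) - σ / (μ * (σ + 1))
    let m₂ := σ⁻¹ * (m₃' + μ⁻¹ * (m₁ + 1))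
    let m₄ := 1 / σ * (1 + 1 / ((σ + 1) * μ))
    let Q : ℝ → ℝ := fun t =>
      m₄ * t ^ 2 - (1 - m₄ + m₂ / (m₁ + 1)) * t - (1 - m₃' / (m₁ + 1))
    Q σ = 0 ∧ ∀ t, 0 < t → Q t = 0 → t = σ := by
  intro m₁ m₃' m₂ m₄ Q
  set A := digamma (μ + 1) - Real.log (μ * σ) with hA
  have hlog : Real.log (μ * σ) = Real.log μ + Real.log σ := Real.log_mul hμ.ne' hσ.ne'
  have hB : 0 < A + σ + 1 := by
    have h1 : Real.log μ ≤ digamma (μ + 1) := log_le_digamma hμ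
    have h2 : Real.log σ ≤ σ - 1 := Real.log_le_sub_one_of_pos hσ
    rw [hA, hlog]; linarith
  have hub : A ≤ 1 / μ + 1 / σ - 1 := by
    have h1 : digamma (μ + 1) ≤ Real.log (μ + 1) := digamma_le_log hμ
    have h2 : Real.log (μ + 1) - Real.log μ ≤ 1 / μ := by
      rw [← Real.log_div (by positivity) hμ.ne']
      have h3 : Real.log ((μ + 1) / μ) ≤ (μ + 1) / μ - 1 :=
        Real.log_le_sub_one_of_pos (by positivity)
      have h4 : (μ + 1) / μ - 1 = 1 / μ := by field_simp; ring
      linarith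
    have h5 : Real.log (1 / σ) ≤ 1 / σ - 1 := Real.log_le_sub_one_of_pos (by positivity)
    rw [Real.log_div one_ne_zero hσ.ne', Real.log_one] at h5
    rw [hA, hlog]; linarith
  exact key_alg μ σ A m₁ m₃' m₂ m₄ Q hμ hσ rfl rfl rfl rfl (fun t => rfl) hB hub
end
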